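/- arXiv:1710.05666 — 7 statements merged into one kernel-verified Lean document; each statement's English description precedes it below -/
import Mathlib

section
/- Let T be a compact operator on a Hilbert space H with Hilbert basis (e_j)_{j∈J} indexed by a countable set J. Then for any finite subset I ⊂ J with #I = n, the (n+1)-st singular value of T satisfies μ_{n+1}(T) ≤ Σ_{j ∈ J∖I} ‖T e_j‖. -/
/-! Take `F = span {e i | i ∈ I}`, of dimension `n`. A unit vector `w ⊥ F` expands as
`∑_{j ∉ I} ⟪e j, w⟫ e j` with coefficients of modulus at most `1`, so
`‖T w‖ ≤ ∑_{j ∉ I} ‖T (e j)‖`. Since `√(T*T)` is self-adjoint with square `T*T`,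
`‖√(T*T) w‖ = ‖T w‖`, which bounds `⟪√(T*T) w, w⟫` and hence `μ_{n+1}(T)`. -/

open ContinuousLinearMap
open scoped InnerProductSpace ENNReal

/-- The `(n+1)`-st singular value of a bounded operator `T` on a complex Hilbert space, via the
min-max principle: the infimum over `n`-dimensional subspaces `F` of the supremum over unit
vectors `w ⊥ F` of `⟪√(T*T) w, w⟫`. -/
noncomputable def singularValue {H : Type*} [NormedAddCommGroup H] [InnerProductSpace ℂ H]
    [CompleteSpace H] (T : H →L[ℂ] H) (n : ℕ) : ℝ :=
  ⨅ F : {F : Submodule ℂ H // Module.finrank ℂ F = n},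
    ⨆ w : {w : H // w ∈ (F : Submodule ℂ H)ᗮ ∧ ‖w‖ = 1},
      (⟪(CFC.sqrt (ContinuousLinearMap.adjoint T ∘L T)) (w : H), (w : H)⟫_ℂ).re

section SqrtAdjointCompSelf

variable {H K : Type*} [NormedAddCommGroup H] [InnerProductSpace ℂ H] [CompleteSpace H]
  [NormedAddCommGroup K] [InnerProductSpace ℂ K] [CompleteSpace K]

theorem norm_sqrt_adjoint_comp_self_apply (T : H →L[ℂ] K) (x : H) :
    ‖CFC.sqrt (adjoint T ∘L T) x‖ = ‖T x‖ := by
  set S := CFC.sqrt (adjoint T ∘L T)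
  have hTT : 0 ≤ adjoint T ∘L T := (nonneg_iff_isPositive _).2 (isPositive_adjoint_comp_self T)
  have hSS : adjoint S ∘L S = adjoint T ∘L T := by
    rw [(IsSelfAdjoint.of_nonneg (CFC.sqrt_nonneg _)).adjoint_eq]
    exact CFC.sqrt_mul_sqrt_self _ hTT
  rw [← sq_eq_sq₀ (norm_nonneg _) (norm_nonneg _), apply_norm_sq_eq_inner_adjoint_left, hSS,
    apply_norm_sq_eq_inner_adjoint_left]

theorem re_inner_sqrt_adjoint_comp_self_le (T : H →L[ℂ] K) (x : H) :
    (⟪CFC.sqrt (adjoint T ∘L T) x, x⟫_ℂ).re ≤ ‖T x‖ * ‖x‖ :=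
  calc (⟪CFC.sqrt (adjoint T ∘L T) x, x⟫_ℂ).re
      ≤ ‖⟪CFC.sqrt (adjoint T ∘L T) x, x⟫_ℂ‖ := Complex.re_le_norm _
    _ ≤ ‖CFC.sqrt (adjoint T ∘L T) x‖ * ‖x‖ := norm_inner_le_norm _ _
    _ = ‖T x‖ * ‖x‖ := by rw [norm_sqrt_adjoint_comp_self_apply]

end SqrtAdjointCompSelf

theorem singularValue_le_of_finrank_eq {H : Type*} [NormedAddCommGroup H] [InnerProductSpace ℂ H]
    [CompleteSpace H] (T : H →L[ℂ] H) {n : ℕ} (F : Submodule ℂ H) (hF : Module.finrank ℂ F = n)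
    {C : ℝ} (hC : 0 ≤ C) (hTC : ∀ w ∈ Fᗮ, ‖w‖ = 1 → ‖T w‖ ≤ C) :
    singularValue T n ≤ C := by
  have hS : (CFC.sqrt (adjoint T ∘L T)).IsPositive :=
    (nonneg_iff_isPositive _).1 (CFC.sqrt_nonneg _)
  refine (ciInf_le ⟨0, Set.forall_mem_range.2 fun _ => Real.iSup_nonneg fun _ =>
    hS.re_inner_nonneg_left _⟩ ⟨F, hF⟩).trans (Real.iSup_le (fun w => ?_) hC)
  obtain ⟨w, hw, hw1⟩ := w
  calc (⟪CFC.sqrt (adjoint T ∘L T) w, w⟫_ℂ).re ≤ ‖T w‖ * ‖w‖ :=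
        re_inner_sqrt_adjoint_comp_self_le T w
    _ ≤ C := by rw [hw1, mul_one]; exact hTC w hw hw1

section HilbertBasis

variable {𝕜 H E J : Type*} [RCLike 𝕜] [NormedAddCommGroup H] [InnerProductSpace 𝕜 H]
  [NormedAddCommGroup E] [NormedSpace 𝕜 E]

theorem HilbertBasis.enorm_apply_le_tsum (e : HilbertBasis J 𝕜 H) (T : H →L[𝕜] E) (w : H) :
    ‖T w‖ₑ ≤ ∑' j, ‖⟪e j, w⟫_𝕜‖ₑ * ‖T (e j)‖ₑ := by
  have hTw : HasSum (fun j => ⟪e j, w⟫_𝕜 • T (e j)) (T w) := by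
    simpa [HilbertBasis.repr_apply_apply] using T.hasSum (e.hasSum_repr w)
  rw [← hTw.tsum_eq]
  simpa only [enorm_smul] using enorm_tsum_le_tsum_enorm (f := fun j => ⟪e j, w⟫_𝕜 • T (e j))

theorem HilbertBasis.enorm_apply_le_tsum_of_inner_eq_zero (e : HilbertBasis J 𝕜 H)
    (T : H →L[𝕜] E) (s : Set J) {w : H} (hw : ∀ j ∈ s, ⟪e j, w⟫_𝕜 = 0) (hw1 : ‖w‖ ≤ 1) :
    ‖T w‖ₑ ≤ ∑' j : {j // j ∉ s}, ‖T (e j)‖ₑ := by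
  have hsupp : (Function.support fun j => ‖⟪e j, w⟫_𝕜‖ₑ * ‖T (e j)‖ₑ) ⊆ sᶜ :=
    fun j hj hjs => hj (by simp [hw j hjs])
  refine (e.enorm_apply_le_tsum T w).trans ?_
  rw [← tsum_subtype_eq_of_support_subset hsupp]
  refine ENNReal.tsum_le_tsum fun j => mul_le_of_le_one_left' ?_
  rw [← ofReal_norm, ENNReal.ofReal_le_one]
  exact (norm_inner_le_norm _ _).trans (by simpa [e.orthonormal.1] using hw1)

end HilbertBasis

theorem singularValue_le_tsum_norm_general
    {H : Type*} [NormedAddCommGroup H] [InnerProductSpace ℂ H] [CompleteSpace H]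
    {J : Type*} (e : HilbertBasis J ℂ H)
    (T : H →L[ℂ] H)
    (I : Finset J) (n : ℕ) (hI : I.card = n) :
    ENNReal.ofReal (singularValue T n) ≤
      ∑' j : {j : J // j ∉ I}, ENNReal.ofReal ‖T (e j)‖ := by
  simp_rw [ofReal_norm]
  obtain hS | hS := eq_or_ne (∑' j : {j : J // j ∉ I}, ‖T (e j)‖ₑ) ⊤
  · simp [hS]
  set F := Submodule.span ℂ (Set.range fun i : I => e i)
  have hF : Module.finrank ℂ F = n := by
    have hli : LinearIndependent ℂ fun i : I => e i :=
      e.orthonormal.linearIndependent.comp _ Subtype.val_injective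
    rw [finrank_span_eq_card hli]
    simpa using hI
  rw [ENNReal.ofReal_le_iff_le_toReal hS]
  refine singularValue_le_of_finrank_eq T F hF ENNReal.toReal_nonneg fun w hw hw1 => ?_
  rw [← ENNReal.ofReal_le_iff_le_toReal hS, ofReal_norm]
  refine e.enorm_apply_le_tsum_of_inner_eq_zero T I (fun j hj => ?_) hw1.le
  exact Submodule.inner_right_of_mem_orthogonal
    (Submodule.subset_span (Set.mem_range_self (⟨j, hj⟩ : I))) hw

/-- for a compact operator `T` on a Hilbert space with Hilbert basis `(e_j)_{j∈J}`,
`J` countable, and any finite `I ⊆ J` with `#I = n`, one has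
`μ_{n+1}(T) ≤ Σ_{j ∈ J∖I} ‖T e_j‖`. -/
theorem singularValue_le_tsum_norm
    {H : Type*} [NormedAddCommGroup H] [InnerProductSpace ℂ H] [CompleteSpace H]
    {J : Type*} [Countable J] (e : HilbertBasis J ℂ H)
    (T : H →L[ℂ] H) (hT : IsCompactOperator T)
    (I : Finset J) (n : ℕ) (hI : I.card = n) :
    ENNReal.ofReal (singularValue T n) ≤
      ∑' j : {j : J // j ∉ I}, ENNReal.ofReal ‖T (e j)‖ :=
  singularValue_le_tsum_norm_general e T I n hI
end

section
/- Let φ: [M₀, ∞) → ℝ≥0 be a C² function with φ'(x) > 0 on [M₀, ∞) and such that sup_{x ≥ M₀} |φ''(x)/(φ'(x))³| ≤ C for some constant C. Then for all M ≥ M₀, ∫_M^∞ e^{-φ(t)} dt ≤ e^{-φ(M)}/φ'(M) + C·e^{-φ(M)}. -/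
/-!
Since `(e^{-φ}/φ')' = -e^{-φ} - e^{-φ} φ''/φ'²` and `φ''/φ'² ≥ -C φ'`, the function
`G = -e^{-φ}/φ' - C e^{-φ}` satisfies `e^{-φ} ≤ G'`. As `G ≤ 0`, integrating gives
`∫_M^N e^{-φ} ≤ G N - G M ≤ -G M` for every `N ≥ M`, and letting `N → ∞` yields the bound.
-/

open MeasureTheory Real Set Filter

section ComparisonWithDerivative

variable {f G G' : ℝ → ℝ} {a B : ℝ}

theorem intervalIntegral_le_sub_of_le_deriv {b : ℝ} (hab : a ≤ b)
    (hG : ∀ x ∈ Ici a, HasDerivAt G (G' x) x) (hGB : ∀ x ∈ Ici a, G x ≤ B)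
    (hf : IntegrableOn f (Icc a b)) (hfG : ∀ x ∈ Ioi a, f x ≤ G' x) :
    ∫ x in a..b, f x ≤ B - G a := by
  have hGb : G b ≤ B := hGB b hab
  have hcont : ContinuousOn G (Icc a b) := fun x hx =>
    (hG x hx.1).continuousAt.continuousWithinAt
  calc ∫ x in a..b, f x
      ≤ G b - G a := intervalIntegral.integral_le_sub_of_hasDeriv_right_of_le hab hcont
          (fun x hx => (hG x (Ioo_subset_Icc_self hx).1).hasDerivWithinAt) hf
          (fun x hx => hfG x hx.1)
    _ ≤ B - G a := by linarith

theorem setIntegral_Ioi_le_sub_of_le_deriv (hf : LocallyIntegrableOn f (Ici a))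
    (hf_nonneg : ∀ x ∈ Ioi a, 0 ≤ f x)
    (hG : ∀ x ∈ Ici a, HasDerivAt G (G' x) x) (hGB : ∀ x ∈ Ici a, G x ≤ B)
    (hfG : ∀ x ∈ Ioi a, f x ≤ G' x) :
    ∫ x in Ioi a, f x ≤ B - G a := by
  have hf_Icc (b : ℝ) : IntegrableOn f (Icc a b) :=
    hf.integrableOn_compact_subset Icc_subset_Ici_self isCompact_Icc
  have hnorm_le : ∀ x ∈ Ioi a, ‖f x‖ ≤ G' x := fun x hx => by
    rw [Real.norm_of_nonneg (hf_nonneg x hx)]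
    exact hfG x hx
  have hint : IntegrableOn f (Ioi a) :=
    integrableOn_Ioi_of_intervalIntegral_norm_bounded (B - G a) a
      (fun b => (hf_Icc b).mono_set Ioc_subset_Icc_self) tendsto_id
      (eventually_ge_atTop a |>.mono fun b hab =>
        intervalIntegral_le_sub_of_le_deriv hab hG hGB (hf_Icc b).norm hnorm_le)
  exact le_of_tendsto (intervalIntegral_tendsto_integral_Ioi a hint tendsto_id)
    (eventually_ge_atTop a |>.mono fun b hab =>
      intervalIntegral_le_sub_of_le_deriv hab hG hGB (hf_Icc b) hfG)

end ComparisonWithDerivative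

theorem neg_mul_le_div_sq_of_abs_div_pow_three_le {p q C : ℝ} (hp : 0 < p)
    (h : |q / p ^ 3| ≤ C) : -(C * p) ≤ q / p ^ 2 :=
  calc -(C * p) = -C * p := (neg_mul C p).symm
    _ ≤ q / p ^ 3 * p := mul_le_mul_of_nonneg_right (neg_le_of_abs_le h) hp.le
    _ = q / p ^ 2 := by field_simp

theorem hasDerivAt_neg_exp_neg_div_sub_const_mul_exp_neg {φ φ' : ℝ → ℝ} {φ'' x : ℝ} (C : ℝ)
    (hφ : HasDerivAt φ (φ' x) x) (hφ' : HasDerivAt φ' φ'' x) (hne : φ' x ≠ 0) :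
    HasDerivAt (fun y => -(exp (-φ y) / φ' y) - C * exp (-φ y))
      (exp (-φ x) * (1 + φ'' / φ' x ^ 2 + C * φ' x)) x := by
  have hexp : HasDerivAt (fun y => exp (-φ y)) (exp (-φ x) * -φ' x) x := hφ.neg.exp
  refine ((hexp.div hφ' hne).fun_neg.fun_sub (hexp.const_mul C)).congr_deriv ?_
  field_simp
  ring

theorem integral_exp_neg_tail_bound_general
    (M₀ C : ℝ) (φ φ' φ'' : ℝ → ℝ)
    (hd1 : ∀ x ∈ Set.Ici M₀, HasDerivAt φ (φ' x) x)
    (hd2 : ∀ x ∈ Set.Ici M₀, HasDerivAt φ' (φ'' x) x)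
    (hpos : ∀ x ∈ Set.Ici M₀, 0 < φ' x)
    (hbound : ∀ x ∈ Set.Ici M₀, |φ'' x / (φ' x) ^ 3| ≤ C) :
    ∀ M ≥ M₀,
      ∫ t in Set.Ioi M, Real.exp (-φ t) ≤
        Real.exp (-φ M) / φ' M + C * Real.exp (-φ M) := by
  intro M hM
  have hC : 0 ≤ C := (abs_nonneg _).trans (hbound M₀ self_mem_Ici)
  have hsub : Ici M ⊆ Ici M₀ := Ici_subset_Ici.mpr hM
  have hcont : ContinuousOn (fun t => exp (-φ t)) (Ici M) := fun x hx =>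
    (hd1 x (hsub hx)).continuousAt.neg.rexp.continuousWithinAt
  have hG_nonpos (x : ℝ) (hx : x ∈ Ici M) : -(exp (-φ x) / φ' x) - C * exp (-φ x) ≤ 0 := by
    have := div_pos (exp_pos (-φ x)) (hpos x (hsub hx))
    have := mul_nonneg hC (exp_pos (-φ x)).le
    linarith
  have hle_deriv (x : ℝ) (hx : x ∈ Ioi M) :
      exp (-φ x) ≤ exp (-φ x) * (1 + φ'' x / φ' x ^ 2 + C * φ' x) := by
    have hx₀ := hsub (Ioi_subset_Ici_self hx)
    have := neg_mul_le_div_sq_of_abs_div_pow_three_le (hpos x hx₀) (hbound x hx₀)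
    exact le_mul_of_one_le_right (exp_pos _).le (by linarith)
  have := setIntegral_Ioi_le_sub_of_le_deriv (hcont.locallyIntegrableOn measurableSet_Ici)
    (fun x _ => (exp_pos _).le)
    (fun x hx => hasDerivAt_neg_exp_neg_div_sub_const_mul_exp_neg C (hd1 x (hsub hx))
      (hd2 x (hsub hx)) (hpos x (hsub hx)).ne')
    hG_nonpos hle_deriv
  linarith

/-- quantitative tail bound for `∫_M^∞ e^{-φ}` under a bound on `φ''/(φ')³`. -/
theorem integral_exp_neg_tail_bound
    (M₀ C : ℝ) (φ φ' φ'' : ℝ → ℝ)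
    (hφ0 : ∀ x ∈ Set.Ici M₀, 0 ≤ φ x)
    (hd1 : ∀ x ∈ Set.Ici M₀, HasDerivAt φ (φ' x) x)
    (hd2 : ∀ x ∈ Set.Ici M₀, HasDerivAt φ' (φ'' x) x)
    (hc2 : ContinuousOn φ'' (Set.Ici M₀))
    (hpos : ∀ x ∈ Set.Ici M₀, 0 < φ' x)
    (hbound : ∀ x ∈ Set.Ici M₀, |φ'' x / (φ' x) ^ 3| ≤ C) :
    ∀ M ≥ M₀,
      ∫ t in Set.Ioi M, Real.exp (-φ t) ≤
        Real.exp (-φ M) / φ' M + C * Real.exp (-φ M) :=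
  integral_exp_neg_tail_bound_general M₀ C φ φ' φ'' hd1 hd2 hpos hbound
end

section
/- Under the hypotheses of the previous lemma, the condition sup_{x≥M₀} |φ''(x)/(φ'(x))³| ≤ C implies that e^{-φ(x)}/φ'(x) → 0 as x → ∞; in particular φ(x) → +∞ as x → ∞. -/
/-!
The bound on `φ''/φ'³` says that `(φ')⁻²` has derivative bounded by `2C`, so it grows at most
linearly: `(φ' x)⁻² ≤ A + B (x - M₀)`. Hence `φ' ≥ (A + B (x - M₀))^{-1/2}`, and integrating,
`φ` grows at least like `v = (2/B) √(A + B (x - M₀))`. Then `e^{-φ}/φ' ≲ v e^{-v} → 0`.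
-/

open Filter Set Real Topology

lemma le_add_mul_sub_of_hasDerivAt_abs_le {f f' : ℝ → ℝ} {a B x : ℝ}
    (hf : ∀ y ∈ Ici a, HasDerivAt f (f' y) y) (hB : ∀ y ∈ Ici a, |f' y| ≤ B) (hx : a ≤ x) :
    f x ≤ f a + B * (x - a) := by
  have h := (convex_Ici a).norm_image_sub_le_of_norm_hasDerivWithin_le
    (fun y hy => (hf y hy).hasDerivWithinAt) hB self_mem_Ici hx
  rw [Real.norm_eq_abs, Real.norm_eq_abs, abs_of_nonneg (sub_nonneg.2 hx)] at h
  linarith [le_abs_self (f x - f a)]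

lemma sub_le_sub_of_hasDerivAt_le {f g f' g' : ℝ → ℝ} {a x : ℝ}
    (hf : ∀ y ∈ Ici a, HasDerivAt f (f' y) y) (hg : ∀ y ∈ Ici a, HasDerivAt g (g' y) y)
    (hle : ∀ y ∈ Ici a, g' y ≤ f' y) (hx : a ≤ x) :
    g x - g a ≤ f x - f a := by
  have hmono : MonotoneOn (fun y => f y - g y) (Ici a) := by
    refine monotoneOn_of_hasDerivWithinAt_nonneg (convex_Ici a)
      (fun y hy => ((hf y hy).sub (hg y hy)).continuousAt.continuousWithinAt)
      (fun y hy => ((hf y (interior_subset hy)).sub (hg y (interior_subset hy))).hasDerivWithinAt)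
      (fun y hy => sub_nonneg.2 (hle y (interior_subset hy)))
  linarith [hmono self_mem_Ici (mem_Ici.2 hx) hx]

lemma hasDerivAt_inv_sq {f f' : ℝ → ℝ} {x : ℝ} (hf : HasDerivAt f (f' x) x) (hx : f x ≠ 0) :
    HasDerivAt (fun y => (f y)⁻¹ ^ 2) (-2 * (f' x / f x ^ 3)) x := by
  refine ((hf.inv hx).pow 2).congr_deriv ?_
  simp only [Pi.inv_apply, Nat.cast_ofNat, Nat.add_one_sub_one, pow_one]
  field_simp

lemma hasDerivAt_two_div_mul_sqrt_affine {A B a x : ℝ} (hB : B ≠ 0) (hx : 0 < A + B * (x - a)) :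
    HasDerivAt (fun y => 2 / B * √(A + B * (y - a))) (√(A + B * (x - a)))⁻¹ x := by
  have hS : HasDerivAt (fun y => A + B * (y - a)) B x := by
    simpa using (((hasDerivAt_id x).sub_const a).const_mul B).const_add A
  refine (((Real.hasDerivAt_sqrt hx.ne').comp x hS).const_mul (2 / B)).congr_deriv ?_
  have := (Real.sqrt_pos.2 hx).ne'
  field_simp

lemma tendsto_exp_neg_div_zero_of_le {f g u : ℝ → ℝ} {l : Filter ℝ} {c K : ℝ}
    (hu : Tendsto u l atTop) (hf : ∀ᶠ x in l, c + u x ≤ f x)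
    (hg : ∀ᶠ x in l, 0 < g x ∧ (g x)⁻¹ ≤ K * u x) :
    Tendsto (fun x => exp (-f x) / g x) l (𝓝 0) := by
  have hlim : Tendsto (fun x => exp (-c) * K * (u x ^ 1 * exp (-u x))) l (𝓝 0) := by
    simpa using ((tendsto_pow_mul_exp_neg_atTop_nhds_zero 1).comp hu).const_mul (exp (-c) * K)
  refine squeeze_zero' (hg.mono fun x hx => div_nonneg (exp_nonneg _) hx.1.le) ?_ hlim
  filter_upwards [hf, hg] with x hfx ⟨hgx, hinv⟩
  calc exp (-f x) / g x = exp (-f x) * (g x)⁻¹ := div_eq_mul_inv _ _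
    _ ≤ exp (-(c + u x)) * (K * u x) := by gcongr
    _ = exp (-c) * K * (u x ^ 1 * exp (-u x)) := by rw [neg_add, exp_add]; ring

theorem tendsto_exp_neg_div_deriv_of_inv_deriv_sq_le {φ φ' : ℝ → ℝ} {a A B : ℝ} (hA : 0 < A)
    (hB : 0 < B) (hd : ∀ x ∈ Ici a, HasDerivAt φ (φ' x) x) (hpos : ∀ x ∈ Ici a, 0 < φ' x)
    (hsq : ∀ x ∈ Ici a, (φ' x)⁻¹ ^ 2 ≤ A + B * (x - a)) :
    Tendsto (fun x => exp (-φ x) / φ' x) atTop (𝓝 0) ∧ Tendsto φ atTop atTop := by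
  have hS : ∀ x ∈ Ici a, 0 < A + B * (x - a) := fun x hx => by
    have := sub_nonneg.2 (mem_Ici.1 hx); positivity
  set v : ℝ → ℝ := fun x => 2 / B * √(A + B * (x - a)) with hv_def
  have hinv : ∀ x ∈ Ici a, (φ' x)⁻¹ ≤ √(A + B * (x - a)) := fun x hx =>
    Real.le_sqrt_of_sq_le (hsq x hx)
  have hv_deriv_le : ∀ x ∈ Ici a, (√(A + B * (x - a)))⁻¹ ≤ φ' x := fun x hx =>
    (inv_le_comm₀ (Real.sqrt_pos.2 (hS x hx)) (hpos x hx)).2 (hinv x hx)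
  have hlow : ∀ᶠ x in atTop, (φ a - v a) + v x ≤ φ x := by
    filter_upwards [eventually_ge_atTop a] with x hx
    have := sub_le_sub_of_hasDerivAt_le hd
      (fun y hy => hasDerivAt_two_div_mul_sqrt_affine hB.ne' (hS y hy)) hv_deriv_le hx
    linarith
  have hv : Tendsto v atTop atTop := by
    refine (Real.tendsto_sqrt_atTop.comp ?_).const_mul_atTop (by positivity)
    exact tendsto_atTop_add_const_left _ A
      ((tendsto_atTop_add_const_right _ (-a) tendsto_id).const_mul_atTop hB)
  refine ⟨tendsto_exp_neg_div_zero_of_le (K := B / 2) hv hlow ?_,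
    tendsto_atTop_mono' _ hlow (tendsto_atTop_add_const_left _ _ hv)⟩
  filter_upwards [eventually_ge_atTop a] with x hx
  refine ⟨hpos x hx, (hinv x hx).trans_eq ?_⟩
  simp only [hv_def]
  field_simp

theorem exp_neg_div_deriv_tendsto_zero_general
    (M₀ C : ℝ) (φ φ' φ'' : ℝ → ℝ)
    (hd1 : ∀ x ∈ Set.Ici M₀, HasDerivAt φ (φ' x) x)
    (hd2 : ∀ x ∈ Set.Ici M₀, HasDerivAt φ' (φ'' x) x)
    (hpos : ∀ x ∈ Set.Ici M₀, 0 < φ' x)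
    (hbound : ∀ x ∈ Set.Ici M₀, |φ'' x / (φ' x) ^ 3| ≤ C) :
    Tendsto (fun x => Real.exp (-φ x) / φ' x) atTop (nhds 0) ∧
      Tendsto φ atTop atTop := by
  have hC : 0 ≤ C := (abs_nonneg _).trans (hbound M₀ self_mem_Ici)
  -- `B = 2C + 1` rather than `2C` keeps the slope positive when `C = 0`.
  refine tendsto_exp_neg_div_deriv_of_inv_deriv_sq_le (A := (φ' M₀)⁻¹ ^ 2) (B := 2 * C + 1)
    (by have := hpos M₀ self_mem_Ici; positivity) (by positivity) hd1 hpos fun x hx => ?_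
  have := le_add_mul_sub_of_hasDerivAt_abs_le (B := 2 * C)
    (fun y hy => hasDerivAt_inv_sq (hd2 y hy) (hpos y hy).ne')
    (fun y hy => by rw [abs_mul, abs_neg, abs_two]; linarith [hbound y hy]) (mem_Ici.1 hx)
  linarith [sub_nonneg.2 (mem_Ici.1 hx)]

/-- under the bound on `φ''/(φ')³`, `e^{-φ(x)}/φ'(x) → 0` and `φ(x) → +∞` as `x → ∞`. -/
theorem exp_neg_div_deriv_tendsto_zero
    (M₀ C : ℝ) (φ φ' φ'' : ℝ → ℝ)
    (hφ0 : ∀ x ∈ Set.Ici M₀, 0 ≤ φ x)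
    (hd1 : ∀ x ∈ Set.Ici M₀, HasDerivAt φ (φ' x) x)
    (hd2 : ∀ x ∈ Set.Ici M₀, HasDerivAt φ' (φ'' x) x)
    (hc2 : ContinuousOn φ'' (Set.Ici M₀))
    (hpos : ∀ x ∈ Set.Ici M₀, 0 < φ' x)
    (hbound : ∀ x ∈ Set.Ici M₀, |φ'' x / (φ' x) ^ 3| ≤ C) :
    Tendsto (fun x => Real.exp (-φ x) / φ' x) atTop (nhds 0) ∧
      Tendsto φ atTop atTop :=
  exp_neg_div_deriv_tendsto_zero_general M₀ C φ φ' φ'' hd1 hd2 hpos hbound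
end

section
/- For every prime p > 3, every non-trivial irreducible complex representation ρ of SL₂(𝔽_p) has dimension d_ρ ≥ (p−1)/2. -/
/-!
Let `t` be the elementary upper unitriangular matrix. The conjugates of the upper unitriangular
matrices generate `SL₂(𝔽_p)`, so a nontrivial representation `ρ` has `ρ t ≠ 1`. Since
`ρ t ^ p = 1` and `X ^ p - 1` is separable, `ρ t` is diagonalizable and has an eigenvalue
`ζ ≠ 1`, a primitive `p`-th root of unity. Conjugating `t` by `diag(a, a⁻¹)` gives `t ^ (a ^ 2)`,
so every `ζ ^ (a ^ 2)` with `a ∈ 𝔽_pˣ` is an eigenvalue of `ρ t` as well, and there are at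
least `(p - 1) / 2` distinct ones.
-/

open CategoryTheory

open Matrix Module Finset

open scoped MatrixGroups

namespace Matrix.SpecialLinearGroup

section transvection

variable {ι : Type*} [Fintype ι] [DecidableEq ι] {i j : ι}

lemma transvection_natCast {R : Type*} [CommRing R] (hij : i ≠ j) (n : ℕ) :
    transvection hij (n : R) = transvection hij 1 ^ n := by
  induction n with
  | zero => simp
  | succ n ih => rw [Nat.cast_succ, transvection_add, ih, pow_succ]

lemma transvection_zmod_eq_pow {n : ℕ} [NeZero n] (hij : i ≠ j) (b : ZMod n) :
    transvection hij b = transvection hij 1 ^ b.val := by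
  rw [← transvection_natCast, ZMod.natCast_zmod_val]

lemma transvection_zmod_one_pow_self (n : ℕ) (hij : i ≠ j) :
    transvection hij (1 : ZMod n) ^ n = 1 := by
  rw [← transvection_natCast, ZMod.natCast_self, transvection_coeff_zero]

end transvection

variable {F : Type*} [Field F]

lemma diag2_mul_transvection_mul_inv (a : F) (ha : a ≠ 0) (b : F) :
    diag2 a ha * transvection zero_ne_one b * (diag2 a ha)⁻¹ =
      transvection zero_ne_one (a ^ 2 * b) := by
  have h := commutator_diag2_transvection a ha b _ rfl
  rw [commutatorElement_def, mul_inv_eq_iff_eq_mul, ← transvection_add] at h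
  rw [h]
  ring_nf

theorem SL2.eq_one_of_map_transvection_eq_one {M : Type*} [Monoid M] (φ : SL(2, F) →* M)
    (h : ∀ b, φ (transvection zero_ne_one b) = 1) : φ = 1 := by
  let w : SL(2, F) := ⟨!![0, -1; 1, 0], by simp [det_fin_two_of]⟩
  have hw (b : F) : w * transvection zero_ne_one b * w⁻¹ = transvection one_ne_zero (-b) := by
    rw [mul_inv_eq_iff_eq_mul]
    refine Subtype.ext ?_
    show !![0, -1; 1, 0] * (1 + single 0 1 b) = (1 + single 1 0 (-b)) * !![0, -1; 1, 0]
    ext i j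
    fin_cases i <;> fin_cases j <;> simp [mul_apply, Fin.sum_univ_two, single_apply, one_apply]
  have hlower (c : F) : φ (transvection one_ne_zero c) = 1 := by
    rw [← neg_neg c, ← hw, map_mul, map_mul, h, mul_one, ← map_mul, mul_inv_cancel, map_one]
  ext g
  refine SL2.transvection_induction (fun g => φ g = 1) (fun i j hij c => ?_)
    (fun A B hA hB => by rw [map_mul, hA, hB, one_mul]) g
  fin_cases i <;> fin_cases j
  · exact absurd rfl hij
  · exact h c
  · exact hlower c
  · exact absurd rfl hij

theorem SL2.eq_one_of_map_transvection_one_eq_one {p : ℕ} [Fact p.Prime] {M : Type*} [Monoid M]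
    (φ : SL(2, ZMod p) →* M) (h : φ (transvection zero_ne_one 1) = 1) : φ = 1 :=
  eq_one_of_map_transvection_eq_one φ fun b => by
    rw [transvection_zmod_eq_pow, map_pow, h, one_pow]

end Matrix.SpecialLinearGroup

namespace Module.End

variable {K V : Type*} [Field K] [AddCommGroup V] [Module K V]

theorem HasEigenvalue.pow_eq_one {f : End K V} {μ : K} (hμ : f.HasEigenvalue μ) {n : ℕ}
    (hf : f ^ n = 1) : μ ^ n = 1 := by
  obtain ⟨v, hv⟩ := hμ.exists_hasEigenvector
  refine smul_left_injective K hv.2 ?_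
  simpa [hf] using (hv.pow_apply n).symm

variable [FiniteDimensional K V]

theorem exists_hasEigenvalue_ne_one_of_pow_eq_one [IsAlgClosed K] {f : End K V} {n : ℕ}
    (hn : (n : K) ≠ 0) (hfn : f ^ n = 1) (hf : f ≠ 1) :
    ∃ μ, f.HasEigenvalue μ ∧ μ ≠ 1 := by
  have hss : f.IsSemisimple := isSemisimple_of_squarefree_aeval_eq_zero
    (Polynomial.separable_X_pow_sub_C 1 hn one_ne_zero).squarefree (by simp [hfn])
  by_contra! h1
  apply hf
  rw [← sub_eq_zero, ← map_one (algebraMap K (End K V))]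
  refine ((isSemisimple_sub_algebraMap_iff.mpr hss).eq_zero_iff_forall_eigenvalue).mpr ?_
  intro μ hμ
  obtain ⟨v, hv⟩ := hμ.exists_hasEigenvector
  have hfv : f v = (μ + 1) • v := by
    have := hv.apply_eq_smul
    rw [map_one, LinearMap.sub_apply, End.one_apply] at this
    rw [add_smul, one_smul, ← this, sub_add_cancel]
  simpa using h1 _ (hasEigenvalue_of_hasEigenvector ⟨mem_eigenspace_iff.mpr hfv, hv.2⟩)

theorem card_le_finrank_of_forall_hasEigenvalue {f : End K V} (s : Finset K)
    (hs : ∀ μ ∈ s, f.HasEigenvalue μ) : #s ≤ finrank K V := by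
  choose v hv using fun μ : s => (hs μ μ.2).exists_hasEigenvector
  have hli : LinearIndependent K v :=
    eigenvectors_linearIndependent' f (fun μ : s => (μ : K)) Subtype.val_injective v hv
  simpa using hli.fintype_card_le_finrank

end Module.End

theorem Representation.hasEigenvalue_pow_of_conj_eq_pow {K G V : Type*} [Field K] [Group G]
    [AddCommGroup V] [Module K V] [FiniteDimensional K V] (ρ : Representation K G V) {g h : G}
    {m : ℕ} (hgh : g * h * g⁻¹ = h ^ m) {μ : K} (hμ : End.HasEigenvalue (ρ h) μ) :
    End.HasEigenvalue (ρ h) (μ ^ m) := by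
  have hconj : ρ (g * h * g⁻¹) = ↑(ρ.toHomUnits g) * ρ h * ↑(ρ.toHomUnits g)⁻¹ := by
    rw [← map_inv, MonoidHom.coe_toHomUnits, MonoidHom.coe_toHomUnits, map_mul, map_mul]
  rw [End.hasEigenvalue_iff_mem_spectrum, ← spectrum.units_conjugate (u := ρ.toHomUnits g),
    ← hconj, hgh, map_pow, ← End.hasEigenvalue_iff_mem_spectrum]
  exact hμ.pow m

theorem card_units_le_two_mul_card_image_sq {R : Type*} [CommRing R] [IsDomain R] [Fintype Rˣ]
    [DecidableEq R] : Fintype.card Rˣ ≤ 2 * #(univ.image fun a : Rˣ => (a : R) ^ 2) := by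
  refine card_le_mul_card_image _ 2 fun b hb => ?_
  obtain ⟨a, -, rfl⟩ := mem_image.mp hb
  refine (card_le_card fun x hx => ?_).trans (card_le_two (a := a) (b := -a))
  rcases sq_eq_sq_iff_eq_or_eq_neg.mp (mem_filter.mp hx).2 with h | h
  · simp [Units.ext h]
  · simp [Units.ext (h.trans (Units.val_neg a).symm)]

theorem ZMod.pow_val_injective {M : Type*} [Monoid M] {x : M} {n : ℕ} [NeZero n]
    (hx : orderOf x = n) : Function.Injective fun k : ZMod n => x ^ k.val := fun k l hkl =>
  ZMod.val_injective n <| pow_injOn_Iio_orderOf (by simpa [hx] using k.val_lt)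
    (by simpa [hx] using l.val_lt) hkl

theorem SL2_nontrivial_irrep_dim_lower_bound_general
    (p : ℕ) [Fact p.Prime]
    (V : FDRep ℂ (Matrix.SpecialLinearGroup (Fin 2) (ZMod p)))
    (hnt : ∃ g, V.ρ g ≠ 1) :
    ((p : ℝ) - 1) / 2 ≤ (Module.finrank ℂ V : ℝ) := by
  have hp : p.Prime := Fact.out
  obtain ⟨g, hg⟩ := hnt
  set A := V.ρ (SpecialLinearGroup.transvection zero_ne_one (1 : ZMod p))
  have hAp : A ^ p = 1 := by
    rw [← map_pow, SpecialLinearGroup.transvection_zmod_one_pow_self, map_one]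
  have hA : A ≠ 1 := fun hA =>
    hg (DFunLike.congr_fun (SpecialLinearGroup.SL2.eq_one_of_map_transvection_one_eq_one V.ρ hA) g)
  obtain ⟨ζ, hζ, hζ1⟩ :=
    End.exists_hasEigenvalue_ne_one_of_pow_eq_one (by exact_mod_cast hp.ne_zero) hAp hA
  have hord : orderOf ζ = p := orderOf_eq_prime (hζ.pow_eq_one hAp) hζ1
  have heig (a : (ZMod p)ˣ) : End.HasEigenvalue A (ζ ^ ((a : ZMod p) ^ 2).val) :=
    Representation.hasEigenvalue_pow_of_conj_eq_pow V.ρ (g := SpecialLinearGroup.diag2 a a.ne_zero)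
      (by rw [SpecialLinearGroup.diag2_mul_transvection_mul_inv, mul_one,
        SpecialLinearGroup.transvection_zmod_eq_pow]) hζ
  have hdim := End.card_le_finrank_of_forall_hasEigenvalue
    ((univ.image fun a : (ZMod p)ˣ => (a : ZMod p) ^ 2).image fun k => ζ ^ k.val)
    (by simpa using heig)
  rw [card_image_of_injective _ (ZMod.pow_val_injective hord)] at hdim
  have hsq := card_units_le_two_mul_card_image_sq (R := ZMod p)
  rw [ZMod.card_units] at hsq
  rw [div_le_iff₀ two_pos, ← Nat.cast_pred hp.pos]
  exact_mod_cast hsq.trans (by omega)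

/-- Frobenius: for `p > 3` prime, every non-trivial irreducible complex
representation of `SL₂(𝔽_p)` has dimension at least `(p-1)/2`. -/
theorem SL2_nontrivial_irrep_dim_lower_bound
    (p : ℕ) [Fact p.Prime] (hp : 3 < p)
    (V : FDRep ℂ (Matrix.SpecialLinearGroup (Fin 2) (ZMod p))) [Simple V]
    (hnt : ∃ g, V.ρ g ≠ 1) :
    ((p : ℝ) - 1) / 2 ≤ (Module.finrank ℂ V : ℝ) :=
  SL2_nontrivial_irrep_dim_lower_bound_general p V hnt
end

section
/- Let G be a finite group with symmetric generating set S, and suppose there is a constant c₀ > 0 such that for every F ∈ L²₀(G) (functions orthogonal to constants), sup_{γ∈S} |⟨γ.F − F, F⟩| ≥ c₀‖F‖². Then the Cheeger constant of the Cayley graph Cay(G, S) satisfies h(Cay(G,S)) ≥ c₀²/4. -/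
/-!
Test the gap on `F = |G|·1_A − |A|`, which has mean zero and `‖F‖² = |A|·|G|·(|G| − |A|)`.
For real `F` one has `⟨γ.F − F, F⟩ = −½‖γ.F − F‖²`, and here
`‖γ.F − F‖² = 2|G|²·#{x ∈ A | xγ ∉ A}`: the `γ`-edges leaving `A` and those entering it are
equinumerous. The gap thus gives `c₀|A|(|G| − |A|) ≤ |G|·#{x ∈ A | xγ ∉ A}`, so
`|∂A| ≥ (c₀/2)|A|` because `|A| ≤ |G|/2`. As that count is at most `|A|`, also `c₀ ≤ 2`, whence
`c₀/2 ≥ c₀²/4`.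
-/

open scoped Classical

open Finset

theorem card_filter_mul_notMem_le_card_boundary {G : Type*} [Mul G] (A S : Finset G) {γ : G}
    (hγ : γ ∈ S) : #{x ∈ A | x * γ ∉ A} ≤ #{q ∈ A ×ˢ S | q.1 * q.2 ∉ A} :=
  card_le_card_of_injOn (fun x => (x, γ)) (fun x hx => by simp_all)
    fun _ _ _ _ h => congrArg Prod.fst h

section Fintype

variable {G : Type*} [Fintype G]

noncomputable def balancedIndicator (A : Finset G) (x : G) : ℝ :=
  if x ∈ A then Fintype.card G - #A else -#A

theorem sum_balancedIndicator (A : Finset G) : ∑ x, balancedIndicator A x = 0 := by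
  simp only [balancedIndicator, sum_ite, filter_univ_mem, filter_notMem_eq_sdiff,
    ← compl_eq_univ_sdiff, sum_const, card_compl, nsmul_eq_mul, Nat.cast_sub (card_le_univ A)]
  ring

theorem sum_balancedIndicator_sq (A : Finset G) :
    ∑ x, balancedIndicator A x ^ 2 = #A * (Fintype.card G - #A) * Fintype.card G := by
  simp only [balancedIndicator, apply_ite (· ^ 2), sum_ite, filter_univ_mem,
    filter_notMem_eq_sdiff, ← compl_eq_univ_sdiff, sum_const, card_compl, nsmul_eq_mul,
    Nat.cast_sub (card_le_univ A)]
  ring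

end Fintype

section Group

variable {G : Type*} [Group G] [Fintype G]

theorem sum_translate_sub_mul_self (f : G → ℝ) (γ : G) :
    ∑ x, (f (x * γ⁻¹) - f x) * f x = -(∑ x, (f (x * γ⁻¹) - f x) ^ 2) / 2 := by
  have hinv : ∑ x, f (x * γ⁻¹) ^ 2 = ∑ x, f x ^ 2 :=
    Fintype.sum_equiv (Equiv.mulRight γ⁻¹) _ _ fun _ => rfl
  simp only [sub_sq, sub_mul, sum_add_distrib, sum_sub_distrib, hinv, mul_assoc, ← mul_sum,
    ← pow_two]
  ring

theorem norm_sum_translate_sub_mul_conj_ofReal (f : G → ℝ) (γ : G) :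
    ‖∑ x, ((f (x * γ⁻¹) : ℂ) - f x) * starRingEnd ℂ (f x)‖ =
      (∑ x, (f (x * γ⁻¹) - f x) ^ 2) / 2 := by
  have hreal : ∑ x, ((f (x * γ⁻¹) : ℂ) - f x) * starRingEnd ℂ (f x) =
      ((∑ x, (f (x * γ⁻¹) - f x) * f x : ℝ) : ℂ) := by
    push_cast
    simp only [Complex.conj_ofReal]
  rw [hreal, Complex.norm_real, Real.norm_eq_abs, sum_translate_sub_mul_self, abs_div, abs_neg,
    abs_two, abs_of_nonneg (sum_nonneg fun _ _ => sq_nonneg _)]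

theorem card_filter_notMem_mul_mem (A : Finset G) (γ : G) :
    #{x | x ∉ A ∧ x * γ ∈ A} = #{x ∈ A | x * γ ∉ A} := by
  set B := A.image (· * γ⁻¹)
  have hB : ∀ x, x ∈ B ↔ x * γ ∈ A := fun x => by simp [B]
  have hcard : #A = #B := (card_image_of_injective _ (mul_left_injective _)).symm
  convert (card_sdiff_comm hcard).symm using 2 <;> ext x <;> simp [hB, and_comm]

theorem sum_sq_translate_sub_balancedIndicator (A : Finset G) (γ : G) :
    ∑ x, (balancedIndicator A (x * γ⁻¹) - balancedIndicator A x) ^ 2 =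
      2 * Fintype.card G ^ 2 * #{x ∈ A | x * γ ∉ A} := by
  rw [← Fintype.sum_equiv (Equiv.mulRight γ)
    (fun y => (balancedIndicator A y - balancedIndicator A (y * γ)) ^ 2) _ fun y => by simp]
  have hpt : ∀ y, (balancedIndicator A y - balancedIndicator A (y * γ)) ^ 2 =
      Fintype.card G ^ 2 * ((if y ∈ A ∧ y * γ ∉ A then 1 else 0) +
        (if y ∉ A ∧ y * γ ∈ A then 1 else 0)) := by
    intro y
    by_cases hy : y ∈ A <;> by_cases hyγ : y * γ ∈ A <;>
      simp only [balancedIndicator, hy, hyγ, not_true_eq_false, not_false_eq_true, and_true,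
        and_false, if_true, if_false] <;> ring
  simp only [hpt, ← mul_sum, sum_add_distrib, sum_boole, card_filter_notMem_mul_mem]
  rw [← filter_filter, filter_univ_mem]
  ring

end Group

theorem cheeger_constant_lower_bound_general
    {G : Type*} [Group G] [Fintype G]
    (S : Finset G)
    (c₀ : ℝ) (hc₀ : 0 < c₀)
    (hgap : ∀ F : G → ℂ, (∑ x, F x) = 0 →
      ∃ γ ∈ S, c₀ * ∑ x, ‖F x‖ ^ 2 ≤
        ‖∑ x, (F (x * γ⁻¹) - F x) * (starRingEnd ℂ) (F x)‖) :
    ∀ A : Finset G, A.Nonempty → 2 * A.card ≤ Fintype.card G →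
      c₀ ^ 2 / 4 ≤
        (((A ×ˢ S).filter (fun q => q.1 * q.2 ∉ A)).card : ℝ) / (A.card : ℝ) := by
  intro A hA hA2
  obtain ⟨γ, hγS, hγ⟩ := hgap (fun x => balancedIndicator A x) <| by
    rw [← Complex.ofReal_sum, sum_balancedIndicator, Complex.ofReal_zero]
  simp only [Complex.norm_real, Real.norm_eq_abs, sq_abs, sum_balancedIndicator_sq,
    norm_sum_translate_sub_mul_conj_ofReal, sum_sq_translate_sub_balancedIndicator] at hγ
  have hk : (0 : ℝ) < #A := by exact_mod_cast hA.card_pos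
  have hkn : 2 * (#A : ℝ) ≤ Fintype.card G := by exact_mod_cast hA2
  have hPk : (#{x ∈ A | x * γ ∉ A} : ℝ) ≤ #A := by exact_mod_cast card_filter_le _ _
  have hPB : (#{x ∈ A | x * γ ∉ A} : ℝ) ≤ #{q ∈ A ×ˢ S | q.1 * q.2 ∉ A} := by
    exact_mod_cast card_filter_mul_notMem_le_card_boundary A S hγS
  set n : ℝ := (Fintype.card G : ℝ)
  set k : ℝ := (#A : ℝ)
  set P : ℝ := (#{x ∈ A | x * γ ∉ A} : ℝ)
  have hlin : c₀ * k ≤ 2 * P := by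
    have hPn : c₀ * k * (n - k) ≤ n * P :=
      le_of_mul_le_mul_right (by linarith) (by linarith : 0 < n)
    refine le_of_mul_le_mul_left ?_ (by linarith : 0 < n - k)
    linarith [mul_le_mul_of_nonneg_right hkn (by positivity : 0 ≤ P)]
  have hc₀2 : c₀ ≤ 2 := le_of_mul_le_mul_right (by linarith) hk
  rw [le_div_iff₀ hk]
  nlinarith [mul_nonneg (mul_nonneg hc₀.le (sub_nonneg.2 hc₀2)) hk.le]

/-- a uniform inner-product gap on `L²₀(G)` gives the lower bound `c₀²/4` on the
Cheeger constant of the Cayley graph `Cay(G, S)`: for every nonempty `A ⊆ G` with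
`|A| ≤ |G|/2`, the edge boundary satisfies `|∂A|/|A| ≥ c₀²/4`. -/
theorem cheeger_constant_lower_bound
    {G : Type*} [Group G] [Fintype G]
    (S : Finset G)
    (hsym : ∀ γ ∈ S, γ⁻¹ ∈ S)
    (hgen : Subgroup.closure (S : Set G) = ⊤)
    (c₀ : ℝ) (hc₀ : 0 < c₀)
    (hgap : ∀ F : G → ℂ, (∑ x, F x) = 0 →
      ∃ γ ∈ S, c₀ * ∑ x, ‖F x‖ ^ 2 ≤
        ‖∑ x, (F (x * γ⁻¹) - F x) * (starRingEnd ℂ) (F x)‖) :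
    ∀ A : Finset G, A.Nonempty → 2 * A.card ≤ Fintype.card G →
      c₀ ^ 2 / 4 ≤
        (((A ×ˢ S).filter (fun q => q.1 * q.2 ∉ A)).card : ℝ) / (A.card : ℝ) :=
  cheeger_constant_lower_bound_general S c₀ hc₀ hgap
end

section
/- Let (λ_k)_{k≥1} be a sequence of complex numbers and suppose there exist constants C > 0, C̃ > 0, η > 0, d ≥ 1 and s ≥ 0 such that |λ_k| ≤ C·d·e^{Cs}·e^{−ηk/d} for all k, and log(1+|λ_k|) ≤ C̃(s+1) for all k. Then Σ_{k=1}^∞ log(1 + |λ_k|) = O(d·log(d+1)·(s²+1)), with implied constant independent of d and s. -/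
private lemma aux_arith (e Ct C a L d s : ℝ) (he : 0 < e) (hCt : 0 < Ct)
    (hC : 0 < C) (ha : 0 ≤ a) (hL : 1/2 ≤ L) (hd : 1 ≤ d) (hs : 0 ≤ s) :
    (d * e * (C * s + a + L) + 1) * (Ct * (s + 1)) + (1 + d * e) ≤
      (2 * (2 * (C + a + 1) * e + 2) * Ct + 2 * (1 + e)) * d * L * (s ^ 2 + 1) := by
  have h1 : C * s + a + L ≤ 2 * (C + a + 1) * L * (s + 1) := by
    nlinarith [mul_nonneg (mul_nonneg (by linarith : (0:ℝ) ≤ 2*L - 1) hC.le) (by linarith : (0:ℝ) ≤ s + 1),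
      mul_nonneg (mul_nonneg (by linarith : (0:ℝ) ≤ 2*L - 1) ha) (by linarith : (0:ℝ) ≤ s + 1),
      mul_nonneg (by linarith : (0:ℝ) ≤ 2*L - 1) hs, mul_nonneg hC.le hs, mul_nonneg ha hs,
      mul_nonneg (mul_nonneg (by linarith : (0:ℝ) ≤ L) hC.le) hs,
      mul_nonneg (mul_nonneg (by linarith : (0:ℝ) ≤ L) ha) hs]
  have hde : 0 < d * e := mul_pos (by linarith) he
  have hL0 : 0 < L := by linarith
  have h2 : 1 ≤ 2 * d * L * (s + 1) := by
    nlinarith [mul_nonneg (mul_nonneg (by linarith : (0:ℝ) ≤ d) hL0.le) hs,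
      mul_nonneg (by linarith : (0:ℝ) ≤ d - 1) hL0.le]
  have h3 : (s + 1) * (s + 1) ≤ 2 * (s ^ 2 + 1) := by nlinarith [sq_nonneg (s - 1)]
  have hCts : 0 ≤ Ct * (s + 1) := by positivity
  have step1 : (d * e * (C * s + a + L) + 1) * (Ct * (s + 1)) ≤
      (d * e * (2 * (C + a + 1) * L * (s + 1)) + 1) * (Ct * (s + 1)) := by
    apply mul_le_mul_of_nonneg_right _ hCts
    have := mul_le_mul_of_nonneg_left h1 hde.le
    linarith
  have step2 : d * e * (2 * (C + a + 1) * L * (s + 1)) + 1 ≤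
      (2 * (C + a + 1) * e + 2) * (d * L * (s + 1)) := by nlinarith
  have step3 : (d * e * (2 * (C + a + 1) * L * (s + 1)) + 1) * (Ct * (s + 1)) ≤
      ((2 * (C + a + 1) * e + 2) * (d * L * (s + 1))) * (Ct * (s + 1)) :=
    mul_le_mul_of_nonneg_right step2 hCts
  have hcoef : 0 ≤ (2 * (C + a + 1) * e + 2) * Ct * d * L := by positivity
  have step4 : ((2 * (C + a + 1) * e + 2) * (d * L * (s + 1))) * (Ct * (s + 1)) ≤
      (2 * (C + a + 1) * e + 2) * Ct * d * L * (2 * (s ^ 2 + 1)) := by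
    have e1 : ((2 * (C + a + 1) * e + 2) * (d * L * (s + 1))) * (Ct * (s + 1)) =
        (2 * (C + a + 1) * e + 2) * Ct * d * L * ((s + 1) * (s + 1)) := by ring
    rw [e1]
    exact mul_le_mul_of_nonneg_left h3 hcoef
  have step5 : 1 + d * e ≤ 2 * (1 + e) * d * L * (s ^ 2 + 1) := by
    have h4 : 1 + d * e ≤ (1 + e) * d := by nlinarith
    have h5 : 1 ≤ 2 * L * (s ^ 2 + 1) := by nlinarith [mul_nonneg hL0.le (sq_nonneg s)]
    have h6 := mul_le_mul_of_nonneg_left h5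
      (mul_nonneg (by linarith : (0:ℝ) ≤ 1 + e) (by linarith : (0:ℝ) ≤ d))
    have e2 : 2 * (1 + e) * d * L * (s ^ 2 + 1) = (1 + e) * d * (2 * L * (s ^ 2 + 1)) := by ring
    rw [e2]
    linarith
  have hring : (2 * (2 * (C + a + 1) * e + 2) * Ct + 2 * (1 + e)) * d * L * (s ^ 2 + 1) =
      (2 * (C + a + 1) * e + 2) * Ct * d * L * (2 * (s ^ 2 + 1)) +
        2 * (1 + e) * d * L * (s ^ 2 + 1) := by ring
  rw [hring]
  linarith [step1, step3, step4, step5]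

set_option maxHeartbeats 1000000 in
/-- from geometric eigenvalue decay `|λ_k| ≤ C d e^{Cs} e^{-ηk/d}` and the
individual bound `log(1+|λ_k|) ≤ C̃(s+1)`, deduce
`Σ_k log(1+|λ_k|) = O(d log(d+1)(s²+1))` uniformly in `d` and `s`. -/
theorem log_sum_eigenvalue_bound
    (C η Ctilde : ℝ) (hC : 0 < C) (hη : 0 < η) (hCt : 0 < Ctilde) :
    ∃ K > 0, ∀ (d s : ℝ), 1 ≤ d → 0 ≤ s → ∀ lam : ℕ → ℝ,
      (∀ k, 0 ≤ lam k) →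
      (∀ k : ℕ, lam k ≤ C * d * Real.exp (C * s) * Real.exp (-η * k / d)) →
      (∀ k : ℕ, Real.log (1 + lam k) ≤ Ctilde * (s + 1)) →
      Summable (fun k => Real.log (1 + lam k)) ∧
        ∑' k, Real.log (1 + lam k) ≤ K * d * Real.log (d + 1) * (s ^ 2 + 1) := by
  have he : 0 < 1/η := by positivity
  have ha : 0 ≤ |Real.log C| := abs_nonneg _
  refine ⟨2 * (2 * (C + |Real.log C| + 1) * (1/η) + 2) * Ctilde + 2 * (1 + 1/η), ?_, ?_⟩
  · have h1 : 0 < 2 * (C + |Real.log C| + 1) * (1/η) + 2 := by nlinarith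
    nlinarith [mul_pos h1 hCt]
  intro d s hd hs lam hlam0 hlamgeo hlamlog
  have hd0 : 0 < d := lt_of_lt_of_le one_pos hd
  set r : ℝ := Real.exp (-η/d) with hr
  have hr0 : 0 < r := Real.exp_pos _
  have hr1 : r < 1 := by
    rw [hr]
    exact Real.exp_lt_one_iff.mpr (div_neg_of_neg_of_pos (by linarith) hd0)
  set A : ℝ := C * d * Real.exp (C * s) with hA
  have hA0 : 0 < A := by positivity
  have hrk : ∀ k : ℕ, Real.exp (-η * k / d) = r ^ k := by
    intro k
    rw [hr, ← Real.exp_nat_mul]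
    congr 1
    ring
  have hgeo : ∀ k, lam k ≤ A * r ^ k := by
    intro k
    have := hlamgeo k
    rwa [hrk k] at this
  have hflog : ∀ k, Real.log (1 + lam k) ≤ lam k := by
    intro k
    have h := Real.log_le_sub_one_of_pos (show (0:ℝ) < 1 + lam k by linarith [hlam0 k])
    linarith
  have hf0 : ∀ k, 0 ≤ Real.log (1 + lam k) := fun k => Real.log_nonneg (by linarith [hlam0 k])
  have hsum : Summable (fun k => Real.log (1 + lam k)) :=
    Summable.of_nonneg_of_le hf0 (fun k => le_trans (hflog k) (hgeo k))
      ((summable_geometric_of_lt_one hr0.le hr1).mul_left A)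
  refine ⟨hsum, ?_⟩
  set N : ℕ := ⌈d/η * (C * s + Real.log (C * d))⌉₊ with hNdef
  -- key exponent inequality
  have hN : Real.log (C * d) + C * s ≤ η * N / d := by
    have h2 : d/η * (C * s + Real.log (C * d)) ≤ (N:ℝ) := Nat.le_ceil _
    have h3 : η/d * (d/η * (C * s + Real.log (C * d))) ≤ η/d * N :=
      mul_le_mul_of_nonneg_left h2 (by positivity)
    have h4 : η/d * (d/η * (C * s + Real.log (C * d))) = C * s + Real.log (C * d) := by
      field_simp
    rw [h4] at h3
    have : η/d * (N:ℝ) = η * N / d := by ring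
    linarith [this ▸ h3]
  have hArN : A * r ^ N ≤ 1 := by
    have key : A * r ^ N = (C * d) * Real.exp (C * s - η * N / d) := by
      rw [hA, hr, ← Real.exp_nat_mul,
        show C * s - η * (N:ℝ) / d = C * s + (N:ℝ) * (-η/d) from by ring, Real.exp_add]
      ring
    rw [key]
    have h5 : C * d ≤ Real.exp (η * N / d - C * s) :=
      (Real.log_le_iff_le_exp (by positivity)).mp (by linarith)
    calc (C * d) * Real.exp (C * s - η * N / d)
        ≤ Real.exp (η * N / d - C * s) * Real.exp (C * s - η * N / d) :=
          mul_le_mul_of_nonneg_right h5 (Real.exp_pos _).le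
      _ = 1 := by rw [← Real.exp_add]; ring_nf; exact Real.exp_zero
  -- tail bound
  have hinv : (1 - r)⁻¹ ≤ 1 + d/η := by
    have hx : η / (d + η) ≤ 1 - r := by
      have h6 : η/d + 1 ≤ Real.exp (η/d) := Real.add_one_le_exp _
      have h7 : r * (η/d + 1) ≤ 1 := by
        rw [hr]
        calc Real.exp (-η/d) * (η/d + 1) ≤ Real.exp (-η/d) * Real.exp (η/d) :=
              mul_le_mul_of_nonneg_left h6 (Real.exp_pos _).le
          _ = 1 := by rw [← Real.exp_add, show -η/d + η/d = 0 from by ring, Real.exp_zero]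
      have h7' : r * (η + d) ≤ d := by
        have hmul := mul_le_mul_of_nonneg_right h7 hd0.le
        have e : r * (η/d + 1) * d = r * (η + d) := by field_simp
        rw [e] at hmul
        linarith
      rw [div_le_iff₀ (by linarith : (0:ℝ) < d + η)]
      nlinarith [h7']
    have h9 : 0 < η / (d + η) := by positivity
    calc (1 - r)⁻¹ ≤ (η / (d + η))⁻¹ := by
          apply inv_anti₀ h9 hx
      _ = (d + η) / η := by rw [inv_div]
      _ = 1 + d/η := by field_simp; ring
  have htail : ∑' k, Real.log (1 + lam (k + N)) ≤ 1 + d/η := by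
    have hsumshift : Summable (fun k => Real.log (1 + lam (k + N))) :=
      (summable_nat_add_iff N).mpr hsum
    have hsumg : Summable (fun k : ℕ => A * r ^ N * r ^ k) :=
      (summable_geometric_of_lt_one hr0.le hr1).mul_left _
    have hle : ∀ k : ℕ, Real.log (1 + lam (k + N)) ≤ A * r ^ N * r ^ k := by
      intro k
      calc Real.log (1 + lam (k + N)) ≤ lam (k + N) := hflog _
        _ ≤ A * r ^ (k + N) := hgeo _
        _ = A * r ^ N * r ^ k := by rw [pow_add]; ring
    calc ∑' k, Real.log (1 + lam (k + N)) ≤ ∑' k : ℕ, A * r ^ N * r ^ k :=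
          Summable.tsum_le_tsum hle hsumshift hsumg
      _ = A * r ^ N * (1 - r)⁻¹ := by
          rw [tsum_mul_left, tsum_geometric_of_lt_one hr0.le hr1]
      _ ≤ 1 * (1 - r)⁻¹ := by
          apply mul_le_mul_of_nonneg_right hArN
          exact inv_nonneg.mpr (by linarith)
      _ = (1 - r)⁻¹ := one_mul _
      _ ≤ 1 + d/η := hinv
  -- head bound
  have hhead : ∑ k ∈ Finset.range N, Real.log (1 + lam k) ≤ N * (Ctilde * (s + 1)) := by
    calc ∑ k ∈ Finset.range N, Real.log (1 + lam k)
        ≤ ∑ _k ∈ Finset.range N, Ctilde * (s + 1) :=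
          Finset.sum_le_sum (fun k _ => hlamlog k)
      _ = N * (Ctilde * (s + 1)) := by
          rw [Finset.sum_const, Finset.card_range, nsmul_eq_mul]
  have hsplit : ∑' k, Real.log (1 + lam k) =
      (∑ k ∈ Finset.range N, Real.log (1 + lam k)) + ∑' k, Real.log (1 + lam (k + N)) :=
    (Summable.sum_add_tsum_nat_add N hsum).symm
  -- bound on N
  have hlogd1 : 0 ≤ Real.log (d + 1) := Real.log_nonneg (by linarith)
  have hNle : (N:ℝ) ≤ d/η * (C * s + |Real.log C| + Real.log (d + 1)) + 1 := by
    set x := d/η * (C * s + Real.log (C * d)) with hxdef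
    have hde : 0 ≤ d/η := by positivity
    have hxy : x ≤ d/η * (C * s + |Real.log C| + Real.log (d + 1)) := by
      apply mul_le_mul_of_nonneg_left _ hde
      have hlm : Real.log (C * d) = Real.log C + Real.log d := Real.log_mul hC.ne' hd0.ne'
      have h2 : Real.log d ≤ Real.log (d + 1) := Real.log_le_log hd0 (by linarith)
      have h3 : Real.log C ≤ |Real.log C| := le_abs_self _
      linarith
    rcases le_or_gt x 0 with h | h
    · have hN0 : N = 0 := Nat.ceil_eq_zero.mpr h
      rw [hN0]
      simp only [Nat.cast_zero]
      have : 0 ≤ d/η * (C * s + |Real.log C| + Real.log (d + 1)) := by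
        apply mul_nonneg hde
        have := abs_nonneg (Real.log C)
        nlinarith [mul_nonneg hC.le hs]
      linarith
    · have := Nat.ceil_lt_add_one h.le
      have hcast : (N:ℝ) < x + 1 := this
      linarith
  -- combine
  have htotal : ∑' k, Real.log (1 + lam k) ≤
      (d/η * (C * s + |Real.log C| + Real.log (d + 1)) + 1) * (Ctilde * (s + 1)) + (1 + d/η) := by
    rw [hsplit]
    have hCts : 0 ≤ Ctilde * (s + 1) := by positivity
    have : (N:ℝ) * (Ctilde * (s + 1)) ≤
        (d/η * (C * s + |Real.log C| + Real.log (d + 1)) + 1) * (Ctilde * (s + 1)) :=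
      mul_le_mul_of_nonneg_right hNle hCts
    linarith [hhead, htail]
  have hL : 1/2 ≤ Real.log (d + 1) := by
    have h2 : Real.log 2 ≤ Real.log (d + 1) := Real.log_le_log (by norm_num) (by linarith)
    linarith [Real.log_two_gt_d9]
  have haux := aux_arith (1/η) Ctilde C |Real.log C| (Real.log (d + 1)) d s he hCt hC ha hL hd hs
  have hrw : d/η = d * (1/η) := by ring
  rw [hrw] at htotal
  linarith [haux, htotal]
end

section
/- Let f be holomorphic on a neighborhood of the closed disc D̄(0, r) in ℂ. Then for all 0 < r' < r, max_{|z| ≤ r'} |f'(z)| ≤ (8r/(r−r')²) · (max_{|z| ≤ r} |Re f(z)| + |f(0)|). -/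
/-!
If `Re f ≤ M` on the disc `|w| < R`, the Borel–Carathéodory theorem gives
`|f w| ≤ 2R (M + |f 0|) / (R - |w|)`. On the circle of radius `ρ = (R - |z|) / 2` about `z`
this is at most `2R (M + |f 0|) / ρ`, and Cauchy's estimate `|f' z| ≤ max |f| / ρ` on that
circle yields `8R (M + |f 0|) / (R - |z|)²`.
-/

open Metric Filter Topology

namespace Complex

variable {f : ℂ → ℂ} {M R : ℝ} {z : ℂ}

theorem borelCaratheodory_of_nonneg (hM : 0 ≤ M) (hf : DifferentiableOn ℂ f (ball 0 R))
    (hf₁ : Set.MapsTo f (ball 0 R) {w | w.re ≤ M}) (hz : z ∈ ball 0 R) :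
    ‖f z‖ ≤ 2 * M * ‖z‖ / (R - ‖z‖) + ‖f 0‖ * (R + ‖z‖) / (R - ‖z‖) := by
  have hR : 0 < R := pos_of_mem_ball hz
  set bound : ℝ → ℝ := fun m =>
    2 * m * ‖z‖ / (R - ‖z‖) + ‖f 0‖ * (R + ‖z‖) / (R - ‖z‖)
  have hε : ∀ᶠ ε in 𝓝[>] (0 : ℝ), ‖f z‖ ≤ bound (M + ε) :=
    eventually_nhdsWithin_of_forall fun ε (hε : 0 < ε) =>
      borelCaratheodory (by positivity) hf
        (hf₁.mono_right fun w (hw : w.re ≤ M) => show w.re ≤ M + ε by linarith) hR hz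
  have hlim : Tendsto (fun ε => bound (M + ε)) (𝓝 0) (𝓝 (bound M)) := by
    simpa using (Continuous.tendsto (by fun_prop) 0 :
      Tendsto (fun ε => bound (M + ε)) (𝓝 0) (𝓝 (bound (M + 0))))
  exact ge_of_tendsto (tendsto_nhdsWithin_of_tendsto_nhds hlim) hε

theorem norm_le_of_re_le (hM : 0 ≤ M) (hf : DifferentiableOn ℂ f (ball 0 R))
    (hf₁ : Set.MapsTo f (ball 0 R) {w | w.re ≤ M}) (hz : z ∈ ball 0 R) :
    ‖f z‖ ≤ 2 * R * (M + ‖f 0‖) / (R - ‖z‖) := by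
  have hzR : ‖z‖ < R := mem_ball_zero_iff.mp hz
  calc ‖f z‖ ≤ 2 * M * ‖z‖ / (R - ‖z‖) + ‖f 0‖ * (R + ‖z‖) / (R - ‖z‖) :=
        borelCaratheodory_of_nonneg hM hf hf₁ hz
    _ = (2 * M * ‖z‖ + ‖f 0‖ * (R + ‖z‖)) / (R - ‖z‖) := by ring
    _ ≤ 2 * R * (M + ‖f 0‖) / (R - ‖z‖) := by
        gcongr
        nlinarith [norm_nonneg (f 0)]

theorem norm_deriv_le_of_re_le (hM : 0 ≤ M) (hf : DifferentiableOn ℂ f (ball 0 R))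
    (hf₁ : Set.MapsTo f (ball 0 R) {w | w.re ≤ M}) (hz : z ∈ ball 0 R) :
    ‖deriv f z‖ ≤ 8 * R * (M + ‖f 0‖) / (R - ‖z‖) ^ 2 := by
  have hR : 0 < R := pos_of_mem_ball hz
  have hzR : ‖z‖ < R := mem_ball_zero_iff.mp hz
  set ρ := (R - ‖z‖) / 2 with hρ_def
  have hρ : 0 < ρ := by positivity
  have hsub : closedBall z ρ ⊆ ball 0 R := closedBall_subset_ball' (by simp; linarith)
  have hbound : ∀ w ∈ sphere z ρ, ‖f w‖ ≤ 2 * R * (M + ‖f 0‖) / ρ := by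
    intro w hw
    have hwz : ‖w‖ ≤ ‖z‖ + ρ := by
      simpa [← dist_eq_norm, mem_sphere.mp hw] using norm_le_norm_add_norm_sub' w z
    calc ‖f w‖ ≤ 2 * R * (M + ‖f 0‖) / (R - ‖w‖) :=
          norm_le_of_re_le hM hf hf₁ (hsub (sphere_subset_closedBall hw))
      _ ≤ 2 * R * (M + ‖f 0‖) / ρ := by
          gcongr
          linarith
  calc ‖deriv f z‖ ≤ 2 * R * (M + ‖f 0‖) / ρ / ρ :=
        norm_deriv_le_of_forall_mem_sphere_norm_le hρ
          (DiffContOnCl.mk_ball (hf.mono (ball_subset_closedBall.trans hsub))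
            (hf.continuousOn.mono hsub)) hbound
    _ = 8 * R * (M + ‖f 0‖) / (R - ‖z‖) ^ 2 := by
        rw [hρ_def]
        field_simp
        ring

end Complex

theorem borel_caratheodory_deriv_bound_general
    (r r' : ℝ) (hrr' : r' < r)
    (f : ℂ → ℂ) (U : Set ℂ) (hsub : closedBall (0 : ℂ) r ⊆ U)
    (hf : DifferentiableOn ℂ f U) :
    ∀ z ∈ closedBall (0 : ℂ) r',
      ‖deriv f z‖ ≤ 8 * r / (r - r') ^ 2 *
        ((⨆ w : closedBall (0 : ℂ) r, |(f w).re|) + ‖f 0‖) := by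
  intro z hz
  set S := ⨆ w : closedBall (0 : ℂ) r, |(f w).re|
  have hzr' : ‖z‖ ≤ r' := mem_closedBall_zero_iff.mp hz
  have hr : 0 ≤ r := by linarith [norm_nonneg z]
  have hfr : DifferentiableOn ℂ f (closedBall 0 r) := hf.mono hsub
  have hbdd : BddAbove (Set.range fun w : closedBall (0 : ℂ) r => |(f w).re|) := by
    rw [← Set.image_eq_range (fun w => |(f w).re|)]
    exact (isCompact_closedBall 0 r).bddAbove_image
      ((continuous_abs.comp Complex.continuous_re).comp_continuousOn hfr.continuousOn)
  have hS : ∀ w ∈ closedBall (0 : ℂ) r, |(f w).re| ≤ S := fun w hw =>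
    le_ciSup hbdd (⟨w, hw⟩ : closedBall (0 : ℂ) r)
  have hS₀ : 0 ≤ S := (abs_nonneg _).trans (hS 0 (mem_closedBall_self hr))
  calc ‖deriv f z‖ ≤ 8 * r * (S + ‖f 0‖) / (r - ‖z‖) ^ 2 :=
        Complex.norm_deriv_le_of_re_le hS₀ (hfr.mono ball_subset_closedBall)
          (fun w hw => (le_abs_self _).trans (hS w (ball_subset_closedBall hw)))
          (mem_ball_zero_iff.mpr (by linarith))
    _ ≤ 8 * r * (S + ‖f 0‖) / (r - r') ^ 2 := by gcongr
    _ = 8 * r / (r - r') ^ 2 * (S + ‖f 0‖) := by ring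

/-- Borel–Carathéodory type bound for the derivative of a holomorphic function. -/
theorem borel_caratheodory_deriv_bound
    (r r' : ℝ) (hr' : 0 < r') (hrr' : r' < r)
    (f : ℂ → ℂ) (U : Set ℂ) (hU : IsOpen U) (hsub : closedBall (0 : ℂ) r ⊆ U)
    (hf : DifferentiableOn ℂ f U) :
    ∀ z ∈ closedBall (0 : ℂ) r',
      ‖deriv f z‖ ≤ 8 * r / (r - r') ^ 2 *
        ((⨆ w : closedBall (0 : ℂ) r, |(f w).re|) + ‖f 0‖) :=
  borel_caratheodory_deriv_bound_general r r' hrr' f U hsub hf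
end
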